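/- arXiv:1103.0868 — 2 statements merged into one kernel-verified Lean document; each statement's English description precedes it below -/
import Mathlib

section
/- Let χ be a weighted game on n voters with exactly two types of voters, without null voters, and with at least two distinct types of shift-minimal winning coalitions (r ≥ 2). Then every LP-feasible triple (w1, w2, q) of nonnegative reals satisfies w2 ≥ 1. -/
def SimpleGame (n : ℕ) (χ : Finset (Fin n) → Prop) : Prop :=
  (∀ U V : Finset (Fin n), U ⊆ V → χ U → χ V) ∧ ¬ χ (∅ : Finset (Fin n)) ∧ χ Finset.univ

def IsRep {n : ℕ} (χ : Finset (Fin n) → Prop) (q : ℕ) (w : Fin n → ℕ) : Prop :=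
  ∀ U : Finset (Fin n), χ U ↔ q ≤ ∑ i ∈ U, w i

def IsWeighted {n : ℕ} (χ : Finset (Fin n) → Prop) : Prop :=
  ∃ q w, IsRep χ q w

def MinRep {n : ℕ} (χ : Finset (Fin n) → Prop) (q : ℕ) (w : Fin n → ℕ) : Prop :=
  IsRep χ q w ∧ ∀ q' w', IsRep χ q' w' → ∀ i, w i ≤ w' i

def Desir {n : ℕ} (χ : Finset (Fin n) → Prop) (i j : Fin n) : Prop :=
  ∀ U : Finset (Fin n), j ∈ U → i ∉ U → χ U → χ (insert i (U.erase j))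

def VEquiv {n : ℕ} (χ : Finset (Fin n) → Prop) (i j : Fin n) : Prop :=
  Desir χ i j ∧ Desir χ j i

def StrictDesir {n : ℕ} (χ : Finset (Fin n) → Prop) (i j : Fin n) : Prop :=
  Desir χ i j ∧ ¬ Desir χ j i

def NullVoter {n : ℕ} (χ : Finset (Fin n) → Prop) (i : Fin n) : Prop :=
  ∀ U : Finset (Fin n), χ (insert i U) ↔ χ U

def ShiftMinWin {n : ℕ} (χ : Finset (Fin n) → Prop) (U : Finset (Fin n)) : Prop :=
  χ U ∧ (∀ i ∈ U, ¬ χ (U.erase i)) ∧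
    ∀ i ∈ U, ∀ j, j ∉ U → StrictDesir χ i j → ¬ χ (insert j (U.erase i))

def ShiftMaxLose {n : ℕ} (χ : Finset (Fin n) → Prop) (U : Finset (Fin n)) : Prop :=
  ¬ χ U ∧ (∀ j, j ∉ U → χ (insert j U)) ∧
    ∀ j ∈ U, ∀ i, i ∉ U → StrictDesir χ i j → χ (insert i (U.erase j))

def TwoTypes {n : ℕ} (χ : Finset (Fin n) → Prop) (N1 N2 : Finset (Fin n)) : Prop :=
  N1.Nonempty ∧ N2.Nonempty ∧ Disjoint N1 N2 ∧ N1 ∪ N2 = Finset.univ ∧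
  (∀ i ∈ N1, ∀ j ∈ N1, VEquiv χ i j) ∧
  (∀ i ∈ N2, ∀ j ∈ N2, VEquiv χ i j) ∧
  (∀ i ∈ N1, ∀ j ∈ N2, StrictDesir χ i j)

noncomputable def NumWinTypes2 {n : ℕ} (χ : Finset (Fin n) → Prop) (N1 N2 : Finset (Fin n)) : ℕ :=
  Set.ncard {p : ℕ × ℕ | ∃ U, ShiftMinWin χ U ∧ p = ((U ∩ N1).card, (U ∩ N2).card)}

def LPFeasible {n : ℕ} (χ : Finset (Fin n) → Prop) (N1 N2 : Finset (Fin n))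
    (w1 w2 q : ℝ) : Prop :=
  0 ≤ w1 ∧ 0 ≤ w2 ∧ 0 ≤ q ∧
  (∀ U, ShiftMinWin χ U → q ≤ ((U ∩ N1).card : ℝ) * w1 + ((U ∩ N2).card : ℝ) * w2) ∧
  (∀ U, ShiftMaxLose χ U → ((U ∩ N1).card : ℝ) * w1 + ((U ∩ N2).card : ℝ) * w2 ≤ q - 1)

def GameIso (n : ℕ) (χ χ' : Finset (Fin n) → Prop) : Prop :=
  ∃ σ : Equiv.Perm (Fin n), ∀ U : Finset (Fin n), χ' U ↔ χ (U.image σ)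

noncomputable def NumTypes (n : ℕ) (χ : Finset (Fin n) → Prop) : ℕ :=
  Set.ncard {S : Set (Fin n) | ∃ i, S = {j | VEquiv χ i j}}

noncomputable def ClassCount (n : ℕ) (χ : Finset (Fin n) → Prop) (U : Finset (Fin n)) (i : Fin n) : ℕ :=
  Set.ncard {j : Fin n | j ∈ U ∧ VEquiv χ i j}

def SameType (n : ℕ) (χ : Finset (Fin n) → Prop) (U V : Finset (Fin n)) : Prop :=
  ∀ i, ClassCount n χ U i = ClassCount n χ V i

noncomputable def NumSMWTypes (n : ℕ) (χ : Finset (Fin n) → Prop) : ℕ :=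
  Set.ncard {T : Set (Finset (Fin n)) | ∃ U, ShiftMinWin χ U ∧
    T = {V | ShiftMinWin χ V ∧ SameType n χ U V}}

noncomputable def wmntr (n t r : ℕ) : ℕ :=
  Set.ncard {C : Set (Finset (Fin n) → Prop) | ∃ χ, SimpleGame n χ ∧ IsWeighted χ ∧
    NumTypes n χ = t ∧ NumSMWTypes n χ = r ∧ C = {χ' | GameIso n χ χ'}}

noncomputable def wmnt (n t : ℕ) : ℕ :=
  Set.ncard {C : Set (Finset (Fin n) → Prop) | ∃ χ, SimpleGame n χ ∧ IsWeighted χ ∧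
    NumTypes n χ = t ∧ C = {χ' | GameIso n χ χ'}}

def PreservesTypes {n : ℕ} (χ : Finset (Fin n) → Prop) (w : Fin n → ℕ) : Prop :=
  ∀ i j, VEquiv χ i j → w i = w j

def MinRepPT {n : ℕ} (χ : Finset (Fin n) → Prop) (q : ℕ) (w : Fin n → ℕ) : Prop :=
  IsRep χ q w ∧ PreservesTypes χ w ∧
    ∀ q' w', IsRep χ q' w' → PreservesTypes χ w' → ∀ i, w i ≤ w' i

def Repre (a b k : ℕ) : Prop := ∃ u v : ℕ, u * a + v * b = k

def Wvec (t a b : ℕ) (l : Fin t → ℕ) (k : Fin t) : Fin (t + b + a) → ℕ :=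
  fun i => if h : (i : ℕ) < t then
      (a * b - l ⟨(i : ℕ), h⟩ - 1) + (if (i : ℕ) = (k : ℕ) then 0 else 1)
    else if (i : ℕ) < t + b then a else b

/-!
Write `N` for the more desirable class, so that the other one is `Nᶜ`, and record the type of a
coalition `U` as `(#(U ∩ N), #U)`. Exchanging voters one at a time shows that winning is upward
closed for the product order on these pairs, so the types of shift-minimal winning coalitions form
an antichain: two distinct ones `U`, `V` have `#(V ∩ N) < #(U ∩ N)` and `#U < #V`.
Every losing coalition lies below a shift-maximal losing one, and in these coordinates the LP value
of a coalition is `#(U ∩ N) * (w1 - w2) + #U * w2`. Swapping a voter of `U ∩ N` for one of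
`Nᶜ \ U` gives a losing coalition below a shift-maximal losing `C` with `#(C ∩ N) + 1 = #(U ∩ N)`
and `#U ≤ #C`, whence `w2 + 1 ≤ w1`. Removing a voter of `V \ N` gives a losing coalition below a
shift-maximal losing `C` with `#(V ∩ N) ≤ #(C ∩ N)` and `#V ≤ #C + 1`; as the LP value is monotone
once `w2 ≤ w1`, the constraints for `V` and `C` force `1 ≤ w2`.
-/

open Finset

variable {n : ℕ} {χ : Finset (Fin n) → Prop} {N U V C : Finset (Fin n)} {i j : Fin n}

lemma TwoTypes.eq_compl {N1 N2 : Finset (Fin n)} (h : TwoTypes χ N1 N2) : N2 = N1ᶜ := by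
  ext x
  have hx := mem_univ x
  rw [← h.2.2.2.1, mem_union] at hx
  have : x ∈ N1 → x ∉ N2 := fun hx => disjoint_left.1 h.2.2.1 hx
  rw [mem_compl]
  tauto

lemma TwoTypes.desir_of_mem_or_notMem {N1 N2 : Finset (Fin n)} (h : TwoTypes χ N1 N2) :
    ∀ i j, i ∈ N1 ∨ j ∉ N1 → Desir χ i j := by
  have hcompl := h.eq_compl
  obtain ⟨-, -, -, -, he1, he2, hstrict⟩ := h
  intro i j hij
  by_cases hi : i ∈ N1 <;> by_cases hj : j ∈ N1
  · exact (he1 i hi j hj).1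
  · exact (hstrict i hi j (hcompl ▸ mem_compl.2 hj)).1
  · exact absurd hj (hij.resolve_left hi)
  · exact (he2 i (hcompl ▸ mem_compl.2 hi) j (hcompl ▸ mem_compl.2 hj)).1

lemma mem_of_strictDesir (hdes : ∀ i j, i ∈ N ∨ j ∉ N → Desir χ i j)
    (h : StrictDesir χ i j) : i ∈ N ∧ j ∉ N := by
  by_contra hij
  exact h.2 (hdes j i (by tauto))

lemma card_insert_erase (hj : j ∈ U) (hi : i ∉ U) : #(insert i (U.erase j)) = #U := by
  rw [card_insert_of_notMem (fun h => hi (mem_of_mem_erase h)), card_erase_add_one hj]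

lemma insert_erase_inter_of_mem_of_notMem (hi : i ∈ N) (hj : j ∉ N) :
    insert i (U.erase j) ∩ N = insert i (U ∩ N) := by
  ext x
  by_cases hx : x = j <;> simp_all

lemma insert_erase_inter_of_notMem (hi : i ∉ N) :
    insert i (U.erase j) ∩ N = (U ∩ N).erase j := by
  rw [insert_inter_of_notMem hi, erase_inter]

lemma erase_inter_of_notMem (hj : j ∉ N) : U.erase j ∩ N = U ∩ N := by
  rw [erase_inter, erase_eq_of_notMem (fun h => hj (mem_inter.1 h).2)]

lemma exists_exchange (hN : #(U ∩ N) ≤ #(V ∩ N)) (hcard : #U ≤ #V) (hUV : (U \ V).Nonempty) :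
    ∃ j ∈ U \ V, ∃ i ∈ V \ U, (i ∈ N ∨ j ∉ N) ∧ #(insert i (U.erase j) ∩ N) ≤ #(V ∩ N) := by
  by_cases hUVN : ∃ j ∈ U \ V, j ∈ N
  · obtain ⟨j, hj, hjN⟩ := hUVN
    obtain ⟨hjU, hjV⟩ := mem_sdiff.1 hj
    have hjUN : j ∈ U ∩ N := mem_inter.2 ⟨hjU, hjN⟩
    obtain ⟨i, hi, hiUN⟩ := exists_mem_notMem_of_card_lt_card (s := (U ∩ N).erase j) (t := V ∩ N)
      (by rw [card_erase_of_mem hjUN]; have := card_pos.2 ⟨j, hjUN⟩; omega)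
    obtain ⟨hiV, hiN⟩ := mem_inter.1 hi
    have hiU : i ∉ U := fun h =>
      hiUN (mem_erase.2 ⟨fun hij => hjV (hij ▸ hiV), mem_inter.2 ⟨h, hiN⟩⟩)
    refine ⟨j, hj, i, mem_sdiff.2 ⟨hiV, hiU⟩, Or.inl hiN, ?_⟩
    rwa [insert_inter_of_mem hiN, erase_inter,
      card_insert_erase hjUN (fun h => hiU (mem_inter.1 h).1)]
  · push Not at hUVN
    obtain ⟨j, hj⟩ := hUV
    obtain ⟨hjU, hjV⟩ := mem_sdiff.1 hj
    obtain ⟨i, hiV, hiUj⟩ := exists_mem_notMem_of_card_lt_card (s := U.erase j) (t := V)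
      (by rw [card_erase_of_mem hjU]; have := card_pos.2 ⟨j, hjU⟩; omega)
    have hiU : i ∉ U := fun h => hiUj (mem_erase.2 ⟨fun hij => hjV (hij ▸ hiV), h⟩)
    refine ⟨j, hj, i, mem_sdiff.2 ⟨hiV, hiU⟩, Or.inr (hUVN j hj), card_le_card fun x hx => ?_⟩
    obtain ⟨hx, hxN⟩ := mem_inter.1 hx
    refine mem_inter.2 ⟨?_, hxN⟩
    rcases mem_insert.1 hx with rfl | hx
    · exact hiV
    · by_contra hxV
      exact hUVN x (mem_sdiff.2 ⟨mem_of_mem_erase hx, hxV⟩) hxN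

lemma win_of_card_le (hmono : ∀ U V : Finset (Fin n), U ⊆ V → χ U → χ V)
    (hdes : ∀ i j, i ∈ N ∨ j ∉ N → Desir χ i j) (hU : χ U)
    (hN : #(U ∩ N) ≤ #(V ∩ N)) (hcard : #U ≤ #V) : χ V := by
  induction hk : #(U \ V) generalizing U with
  | zero => exact hmono U V (sdiff_eq_empty_iff_subset.1 (card_eq_zero.1 hk)) hU
  | succ k ih =>
    obtain ⟨j, hj, i, hi, hij, hN'⟩ := exists_exchange hN hcard (card_pos.1 (by omega))
    obtain ⟨hjU, -⟩ := mem_sdiff.1 hj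
    obtain ⟨hiV, hiU⟩ := mem_sdiff.1 hi
    refine ih (hdes i j hij U hjU hiU hU) hN' (by rwa [card_insert_erase hjU hiU]) ?_
    rw [insert_sdiff_of_mem _ hiV, erase_sdiff_comm, card_erase_of_mem hj, hk, Nat.add_sub_cancel]

lemma exists_shiftMaxLose_ge (hdes : ∀ i j, i ∈ N ∨ j ∉ N → Desir χ i j) (hU : ¬ χ U) :
    ∃ C, ShiftMaxLose χ C ∧ #(U ∩ N) ≤ #(C ∩ N) ∧ #U ≤ #C := by
  classical
  -- a losing coalition above `U` maximising `#(C ∩ N) + #C` is shift-maximal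
  obtain ⟨C, hC, hmax⟩ := exists_max_image
    (univ.filter fun C => ¬ χ C ∧ #(U ∩ N) ≤ #(C ∩ N) ∧ #U ≤ #C)
    (fun C => #(C ∩ N) + #C) ⟨U, by simp [hU]⟩
  simp only [mem_filter, mem_univ, true_and] at hC hmax
  obtain ⟨hCl, hCN, hCc⟩ := hC
  refine ⟨C, ⟨hCl, fun j hj => ?_, fun j hj i hi hij => ?_⟩, hCN, hCc⟩
  · by_contra hl
    have hN : #(C ∩ N) ≤ #(insert j C ∩ N) := card_le_card (by gcongr; exact subset_insert j C)
    have := hmax (insert j C) ⟨hl, hCN.trans hN, by rw [card_insert_of_notMem hj]; omega⟩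
    rw [card_insert_of_notMem hj] at this
    omega
  · obtain ⟨hiN, hjN⟩ := mem_of_strictDesir hdes hij
    by_contra hl
    have hN : #(insert i (C.erase j) ∩ N) = #(C ∩ N) + 1 := by
      rw [insert_erase_inter_of_mem_of_notMem hiN hjN,
        card_insert_of_notMem (fun h => hi (mem_inter.1 h).1)]
    have := hmax _ ⟨hl, by omega, by rw [card_insert_erase hj hi]; omega⟩
    rw [hN, card_insert_erase hj hi] at this
    omega

lemma ShiftMinWin.eq_of_card_le (hmono : ∀ U V : Finset (Fin n), U ⊆ V → χ U → χ V)
    (hdes : ∀ i j, i ∈ N ∨ j ∉ N → Desir χ i j)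
    (hstrict : ∀ i ∈ N, ∀ j ∉ N, StrictDesir χ i j)
    (hU : ShiftMinWin χ U) (hV : ShiftMinWin χ V) (hN : #(U ∩ N) ≤ #(V ∩ N))
    (hcard : #U ≤ #V) : #(U ∩ N) = #(V ∩ N) ∧ #U = #V := by
  have hUN : #(U ∩ N) ≤ #U := card_le_card inter_subset_left
  rcases hcard.lt_or_eq with hlt | heq
  · -- `V` minus a voter (outside `N` if possible) still lies above `U`, contradicting minimality
    obtain ⟨j, hjV, hjN⟩ : ∃ j ∈ V, #(U ∩ N) ≤ #(V.erase j ∩ N) := by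
      by_cases hVN : ∃ j ∈ V, j ∉ N
      · obtain ⟨j, hjV, hjN⟩ := hVN
        exact ⟨j, hjV, by rwa [erase_inter_of_notMem hjN]⟩
      · push Not at hVN
        obtain ⟨j, hjV⟩ := card_pos.1 (by omega : 0 < #V)
        refine ⟨j, hjV, ?_⟩
        rw [erase_inter, inter_eq_left.2 hVN, card_erase_of_mem hjV]
        omega
    exact absurd (win_of_card_le hmono hdes hU.1 hjN (by rw [card_erase_of_mem hjV]; omega))
      (hV.2.1 j hjV)
  · refine ⟨hN.antisymm (not_lt.1 fun hlt => ?_), heq⟩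
    obtain ⟨i, hi⟩ := card_pos.1 (by omega : 0 < #(V ∩ N))
    obtain ⟨hiV, hiN⟩ := mem_inter.1 hi
    obtain ⟨j, hj, hjV⟩ := exists_mem_notMem_of_card_lt_card (s := V \ N) (t := U \ N)
      (by have := card_sdiff_add_card_inter U N; have := card_sdiff_add_card_inter V N; omega)
    obtain ⟨-, hjN⟩ := mem_sdiff.1 hj
    have hjV : j ∉ V := fun h => hjV (mem_sdiff.2 ⟨h, hjN⟩)
    refine hV.2.2 i hiV j hjV (hstrict i hiN j hjN) (win_of_card_le hmono hdes hU.1 ?_ ?_)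
    · rw [insert_erase_inter_of_notMem hjN, card_erase_of_mem hi]
      omega
    · rw [card_insert_erase hiV hjV]
      omega

lemma cast_card_inter_mul_add (U N : Finset (Fin n)) (w1 w2 : ℝ) :
    (#(U ∩ N) : ℝ) * w1 + #(U ∩ Nᶜ) * w2 = #(U ∩ N) * (w1 - w2) + #U * w2 := by
  rw [← sdiff_eq_inter_compl, ← card_inter_add_card_sdiff U N]
  push_cast
  ring

section LPFeasible

variable {w1 w2 q : ℝ}

lemma LPFeasible.le_of_shiftMinWin (hlp : LPFeasible χ N Nᶜ w1 w2 q) (hU : ShiftMinWin χ U) :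
    q ≤ #(U ∩ N) * (w1 - w2) + #U * w2 :=
  cast_card_inter_mul_add U N w1 w2 ▸ hlp.2.2.2.1 U hU

lemma LPFeasible.le_of_shiftMaxLose (hlp : LPFeasible χ N Nᶜ w1 w2 q) (hC : ShiftMaxLose χ C) :
    #(C ∩ N) * (w1 - w2) + #C * w2 ≤ q - 1 :=
  cast_card_inter_mul_add C N w1 w2 ▸ hlp.2.2.2.2 C hC

lemma LPFeasible.add_one_le (hmono : ∀ U V : Finset (Fin n), U ⊆ V → χ U → χ V)
    (hdes : ∀ i j, i ∈ N ∨ j ∉ N → Desir χ i j) (hstrict : ∀ i ∈ N, ∀ j ∉ N, StrictDesir χ i j)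
    (hlp : LPFeasible χ N Nᶜ w1 w2 q) (hU : ShiftMinWin χ U) (hi : i ∈ U ∩ N) (hjU : j ∉ U)
    (hjN : j ∉ N) : w2 + 1 ≤ w1 := by
  obtain ⟨hiU, hiN⟩ := mem_inter.1 hi
  obtain ⟨C, hC, hCN, hCc⟩ :=
    exists_shiftMaxLose_ge hdes (hU.2.2 i hiU j hjU (hstrict i hiN j hjN))
  rw [insert_erase_inter_of_notMem hjN, card_erase_of_mem hi] at hCN
  rw [card_insert_erase hiU hjU] at hCc
  -- `C` loses, so it does not lie above `U`
  have hCN' : #(C ∩ N) + 1 = #(U ∩ N) := by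
    by_contra h
    exact hC.1 (win_of_card_le hmono hdes hU.1 (by omega) hCc)
  have hCN'' : (#(C ∩ N) : ℝ) + 1 = #(U ∩ N) := by exact_mod_cast hCN'
  have hCc' : (#U : ℝ) ≤ #C := by exact_mod_cast hCc
  nlinarith [hlp.le_of_shiftMinWin hU, hlp.le_of_shiftMaxLose hC,
    mul_le_mul_of_nonneg_right hCc' hlp.2.1]

lemma LPFeasible.one_le (hdes : ∀ i j, i ∈ N ∨ j ∉ N → Desir χ i j)
    (hlp : LPFeasible χ N Nᶜ w1 w2 q) (hw : w2 ≤ w1) (hV : ShiftMinWin χ V) (hjV : j ∈ V)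
    (hjN : j ∉ N) : 1 ≤ w2 := by
  obtain ⟨C, hC, hCN, hCc⟩ := exists_shiftMaxLose_ge hdes (hV.2.1 j hjV)
  rw [erase_inter_of_notMem hjN] at hCN
  rw [card_erase_of_mem hjV] at hCc
  have hCN' : (#(V ∩ N) : ℝ) ≤ #(C ∩ N) := by exact_mod_cast hCN
  have hCc' : (#V : ℝ) ≤ #C + 1 := by exact_mod_cast (by omega : #V ≤ #C + 1)
  nlinarith [hlp.le_of_shiftMinWin hV, hlp.le_of_shiftMaxLose hC,
    mul_le_mul_of_nonneg_right hCN' (sub_nonneg.2 hw), mul_le_mul_of_nonneg_right hCc' hlp.2.1]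

end LPFeasible

lemma exists_shiftMinWin_cross (hmono : ∀ U V : Finset (Fin n), U ⊆ V → χ U → χ V)
    (hdes : ∀ i j, i ∈ N ∨ j ∉ N → Desir χ i j) (hstrict : ∀ i ∈ N, ∀ j ∉ N, StrictDesir χ i j)
    (hr : 2 ≤ NumWinTypes2 χ N Nᶜ) :
    ∃ U V, ShiftMinWin χ U ∧ ShiftMinWin χ V ∧ #(V ∩ N) < #(U ∩ N) ∧ #U < #V := by
  obtain ⟨_, ⟨U, hU, rfl⟩, _, ⟨V, hV, rfl⟩, hpair⟩ :=
    (Set.one_lt_ncard (Set.finite_of_ncard_pos (by unfold NumWinTypes2 at hr; omega))).1 hr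
  have hne : #(U ∩ N) ≠ #(V ∩ N) ∨ #U ≠ #V := by
    by_contra h
    push Not at h
    refine hpair (Prod.ext h.1 ?_)
    simp only [← sdiff_eq_inter_compl]
    have := card_inter_add_card_sdiff U N
    have := card_inter_add_card_sdiff V N
    omega
  clear hpair
  wlog h : #(V ∩ N) ≤ #(U ∩ N) generalizing U V
  · exact this V hV U hU (hne.imp Ne.symm Ne.symm) (by omega)
  have hUV : #U < #V := not_le.1 fun hle => by
    have := hV.eq_of_card_le hmono hdes hstrict hU h hle
    omega
  have hN : #(V ∩ N) < #(U ∩ N) := h.lt_of_ne fun heq => by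
    have := hU.eq_of_card_le hmono hdes hstrict hV heq.ge hUV.le
    omega
  exact ⟨U, V, hU, hV, hN, hUV⟩

theorem stmt5_general (n : ℕ) (χ : Finset (Fin n) → Prop) (hsg : SimpleGame n χ)
    (N1 N2 : Finset (Fin n)) (h2 : TwoTypes χ N1 N2)
    (hr : 2 ≤ NumWinTypes2 χ N1 N2) :
    ∀ w1 w2 q : ℝ, LPFeasible χ N1 N2 w1 w2 q → 1 ≤ w2 := by
  intro w1 w2 q hlp
  obtain rfl := h2.eq_compl
  have hdes := h2.desir_of_mem_or_notMem
  have hstrict : ∀ i ∈ N1, ∀ j ∉ N1, StrictDesir χ i j :=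
    fun i hi j hj => h2.2.2.2.2.2.2 i hi j (mem_compl.2 hj)
  obtain ⟨U, V, hU, hV, hN, hcard⟩ := exists_shiftMinWin_cross hsg.1 hdes hstrict hr
  obtain ⟨i, hi⟩ := card_pos.1 (by omega : 0 < #(U ∩ N1))
  obtain ⟨j, hj, hjU⟩ := exists_mem_notMem_of_card_lt_card (s := U \ N1) (t := V \ N1)
    (by have := card_sdiff_add_card_inter U N1; have := card_sdiff_add_card_inter V N1; omega)
  obtain ⟨hjV, hjN⟩ := mem_sdiff.1 hj
  have hw := hlp.add_one_le hsg.1 hdes hstrict hU hi (fun h => hjU (mem_sdiff.2 ⟨h, hjN⟩)) hjN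
  exact hlp.one_le hdes (by linarith) hV hjV hjN

theorem stmt5 (n : ℕ) (χ : Finset (Fin n) → Prop) (hsg : SimpleGame n χ)
    (hwt : IsWeighted χ) (N1 N2 : Finset (Fin n)) (h2 : TwoTypes χ N1 N2)
    (hnull : ∀ i, ¬ NullVoter χ i) (hr : 2 ≤ NumWinTypes2 χ N1 N2) :
    ∀ w1 w2 q : ℝ, LPFeasible χ N1 N2 w1 w2 q → 1 ≤ w2 :=
  stmt5_general n χ hsg N1 N2 h2 hr
end

section
/- Let χ be the weighted game on 20 voters represented by [77; 25, 17, 11, 11, 11, 11, 11, 11, 11, 7, 7, 7, 7, 7, 7, 7, 7, 7, 7, 7]. Then χ has exactly four types of voters, the vector [77; 24, 18, 11, 11, 11, 11, 11, 11, 11, 7, 7, 7, 7, 7, 7, 7, 7, 7, 7, 7] is also an integer representation of χ, and χ admits no minimum integer representation preserving types. In particular, there exists a weighted game with exactly four types of voters that has no minimum integer representation preserving types. -/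
def w15 : Fin 20 → ℕ :=
  fun i => if (i : ℕ) = 0 then 25 else if (i : ℕ) = 1 then 17
    else if (i : ℕ) < 9 then 11 else 7

def w15' : Fin 20 → ℕ :=
  fun i => if (i : ℕ) = 0 then 24 else if (i : ℕ) = 1 then 18
    else if (i : ℕ) < 9 then 11 else 7

def chi15 : Finset (Fin 20) → Prop := fun U => 77 ≤ ∑ i ∈ U, w15 i

/-!
The voters of `chi15` fall into four weight classes `25, 17, 11, 7`, and desirability is exactly
the weight order: a heavier voter may always replace a lighter one, while a winning coalition
whose weight exceeds 77 by less than the weight gap shows that a lighter voter cannot replace a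
heavier one. As the game is invariant under permutations within a class, one such coalition per
class suffices.

Both `w15` and `w15'` are type-preserving representations, so a minimum one would give voter 0
weight at most 24 and voter 1 weight at most 17. The winning coalitions of eleven 7-voters, of
seven 11-voters and of voters 0, 1 with five 7-voters, against the losing coalition of five
11-voters and three 7-voters, rule this out.
-/

open Finset

theorem sum_insert_erase_add {α M : Type*} [DecidableEq α] [AddCommMonoid M] (w : α → M)
    {U : Finset α} {i j : α} (hj : j ∈ U) (hi : i ∉ U) :
    ∑ x ∈ insert i (U.erase j), w x + w j = ∑ x ∈ U, w x + w i := by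
  rw [sum_insert (fun h => hi (mem_of_mem_erase h)), add_assoc, sum_erase_add _ _ hj, add_comm]

theorem sum_comp_eq_sum_card_mul {ι κ : Type*} [Fintype κ] [DecidableEq κ] (s : Finset ι)
    (g : ι → κ) (a : κ → ℕ) : ∑ i ∈ s, a (g i) = ∑ k, #{i ∈ s | g i = k} * a k := by
  rw [← sum_fiberwise s g]
  refine sum_congr rfl fun k _ => ?_
  rw [sum_congr rfl fun i hi => congrArg a (mem_filter.1 hi).2, sum_const, smul_eq_mul]

theorem Desir.map_perm {n : ℕ} {χ : Finset (Fin n) → Prop} {i j : Fin n}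
    (σ : Equiv.Perm (Fin n)) (hσ : ∀ U, χ (U.map σ.toEmbedding) ↔ χ U) (h : Desir χ i j) :
    Desir χ (σ i) (σ j) := by
  intro U hj hi hU
  have hU' : (U.map σ.symm.toEmbedding).map σ.toEmbedding = U := by
    simp [map_map]
  have := (hσ _).2 (h (U.map σ.symm.toEmbedding) (by simpa using hj) (by simpa using hi)
    ((hσ _).1 (hU'.symm ▸ hU)))
  rwa [map_insert, map_erase, hU'] at this

theorem numTypes_eq_ncard_range {n : ℕ} {χ : Finset (Fin n) → Prop} {κ : Type*}
    (f : Fin n → κ) (hf : ∀ i j, VEquiv χ i j ↔ f i = f j) :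
    NumTypes n χ = (Set.range f).ncard := by
  have hclasses : {S : Set (Fin n) | ∃ i, S = {j | VEquiv χ i j}} =
      (fun k => {j | f j = k}) '' Set.range f := by
    ext S
    simp [hf, eq_comm]
  rw [NumTypes, hclasses, Set.InjOn.ncard_image]
  rintro _ ⟨i, rfl⟩ _ ⟨i', rfl⟩ h
  exact (Set.ext_iff.1 h i).1 rfl

namespace IsRep

variable {n : ℕ} {χ : Finset (Fin n) → Prop} {q : ℕ} {w : Fin n → ℕ}

theorem simpleGame (h : IsRep χ q w) (hq : 0 < q) (hsum : q ≤ ∑ i, w i) : SimpleGame n χ := by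
  refine ⟨fun U V hUV hU => (h V).2 (((h U).1 hU).trans (sum_le_sum_of_subset hUV)),
    fun h0 => ?_, (h univ).2 hsum⟩
  have := (h ∅).1 h0
  simp only [sum_empty] at this
  omega

theorem desir_of_le (h : IsRep χ q w) {i j : Fin n} (hij : w j ≤ w i) : Desir χ i j := by
  intro U hj hi hU
  rw [h] at hU ⊢
  have := sum_insert_erase_add w hj hi
  omega

theorem not_desir (h : IsRep χ q w) {i j : Fin n} {U : Finset (Fin n)} (hj : j ∈ U) (hi : i ∉ U)
    (hU : χ U) (hlt : ∑ x ∈ U, w x + w i < q + w j) : ¬ Desir χ i j := by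
  intro hD
  have := (h _).1 (hD U hj hi hU)
  have := sum_insert_erase_add w hj hi
  omega

theorem map_perm_iff (h : IsRep χ q w) {σ : Equiv.Perm (Fin n)} (hσ : ∀ i, w (σ i) = w i)
    (U : Finset (Fin n)) : χ (U.map σ.toEmbedding) ↔ χ U := by
  rw [h, h, sum_map]
  simp only [Equiv.coe_toEmbedding, hσ]

end IsRep

theorem isRep_chi15 : IsRep chi15 77 w15 := fun _ => Iff.rfl

instance : DecidablePred chi15 := fun U => inferInstanceAs (Decidable (77 ≤ ∑ i ∈ U, w15 i))

def voterType (i : Fin 20) : Fin 4 :=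
  if i = 0 then 0 else if i = 1 then 1 else if (i : ℕ) < 9 then 2 else 3

def typeRep : Fin 4 → Fin 20 := ![0, 1, 2, 9]

theorem voterType_typeRep (k : Fin 4) : voterType (typeRep k) = k := by
  revert k; decide

theorem w15_eq (i : Fin 20) : w15 i = ![25, 17, 11, 7] (voterType i) := by
  revert i; decide

theorem w15'_eq (i : Fin 20) : w15' i = ![24, 18, 11, 7] (voterType i) := by
  revert i; decide

theorem w15_typeRep_voterType (i : Fin 20) : w15 (typeRep (voterType i)) = w15 i := by
  rw [w15_eq, w15_eq, voterType_typeRep]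

theorem w15_eq_w15_iff {i j : Fin 20} : w15 i = w15 j ↔ voterType i = voterType j := by
  revert i j; decide

theorem voterType_lt_of_w15_lt {i j : Fin 20} (h : w15 i < w15 j) : voterType j < voterType i := by
  revert i j; decide

def lightSwapWitness : Fin 4 → Finset (Fin 20) :=
  ![{0, 3, 4, 5, 10, 11, 12}, {1, 3, 4, 5, 6, 7, 10}, {2, 3, 4, 5, 6, 7, 8}, ∅]

theorem not_desir_typeRep {s t : Fin 4} (hst : s < t) : ¬ Desir chi15 (typeRep t) (typeRep s) := by
  obtain ⟨hs, ht, hwin, hlt⟩ : typeRep s ∈ lightSwapWitness s ∧ typeRep t ∉ lightSwapWitness s ∧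
      chi15 (lightSwapWitness s) ∧
      ∑ x ∈ lightSwapWitness s, w15 x + w15 (typeRep t) < 77 + w15 (typeRep s) := by
    revert s t; decide
  exact isRep_chi15.not_desir hs ht hwin hlt

theorem swap_apply_eq_of_eq {α β : Type*} [DecidableEq α] {w : α → β} {a b : α} (hab : w a = w b)
    (x : α) : w (Equiv.swap a b x) = w x := by
  rw [Equiv.swap_apply_def]
  split_ifs with hxa hxb
  · rw [hxa, hab]
  · rw [hxb, hab]
  · rfl

theorem desir_chi15_iff {i j : Fin 20} : Desir chi15 i j ↔ w15 j ≤ w15 i := by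
  refine ⟨fun h => ?_, isRep_chi15.desir_of_le⟩
  by_contra! hlt
  set ri := typeRep (voterType i)
  set rj := typeRep (voterType j)
  have hri : w15 ri = w15 i := w15_typeRep_voterType i
  have hrj : w15 rj = w15 j := w15_typeRep_voterType j
  set σ := Equiv.swap i ri * Equiv.swap j rj
  have hσ : ∀ x, w15 (σ x) = w15 x := fun x => by
    simp only [σ, Equiv.Perm.mul_apply, swap_apply_eq_of_eq hri.symm,
      swap_apply_eq_of_eq hrj.symm]
  have hne : ∀ {x y : Fin 20}, w15 x < w15 y → x ≠ y := fun h e => (e ▸ h).false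
  have hσi : σ i = ri := by
    rw [Equiv.Perm.mul_apply, Equiv.swap_apply_of_ne_of_ne (hne hlt) (hne (hrj ▸ hlt)),
      Equiv.swap_apply_left]
  have hσj : σ j = rj := by
    rw [Equiv.Perm.mul_apply, Equiv.swap_apply_left,
      Equiv.swap_apply_of_ne_of_ne (hne (hrj ▸ hlt)).symm (hne (hri ▸ hrj ▸ hlt)).symm]
  have := h.map_perm σ (isRep_chi15.map_perm_iff hσ)
  rw [hσi, hσj] at this
  exact not_desir_typeRep (voterType_lt_of_w15_lt hlt) this

theorem vequiv_chi15_iff {i j : Fin 20} : VEquiv chi15 i j ↔ voterType i = voterType j := by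
  rw [VEquiv, desir_chi15_iff, desir_chi15_iff, and_comm, ← le_antisymm_iff, w15_eq_w15_iff]

theorem numTypes_chi15 : NumTypes 20 chi15 = 4 := by
  have hsurj : Function.Surjective voterType := fun k => ⟨typeRep k, voterType_typeRep k⟩
  rw [numTypes_eq_ncard_range voterType fun _ _ => vequiv_chi15_iff, hsurj.range_eq,
    Set.ncard_univ, Nat.card_eq_fintype_card, Fintype.card_fin]

def typeCount (U : Finset (Fin 20)) (k : Fin 4) : ℕ := #{i ∈ U | voterType i = k}

theorem typeCount_le (U : Finset (Fin 20)) (k : Fin 4) : typeCount U k ≤ ![1, 1, 7, 11] k :=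
  (card_le_card (filter_subset_filter _ (subset_univ U))).trans (by revert k; decide)

theorem sum_voterType_eq (U : Finset (Fin 20)) (b : Fin 4 → ℕ) :
    ∑ i ∈ U, b (voterType i) = ∑ k, typeCount U k * b k :=
  sum_comp_eq_sum_card_mul U voterType b

theorem sum_eq_sum_typeCount_mul {w : Fin 20 → ℕ} (hw : PreservesTypes chi15 w)
    (U : Finset (Fin 20)) : ∑ i ∈ U, w i = ∑ k, typeCount U k * w (typeRep k) := by
  rw [← sum_voterType_eq]
  exact sum_congr rfl fun i _ => hw _ _ (vequiv_chi15_iff.2 (voterType_typeRep _).symm)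

-- Shifting one unit of weight from voter 0 to voter 1 could only change the outcome of a
-- coalition with 0 but not 1 of weight 77, or with 1 but not 0 of weight 76; as
-- `11 a + 7 b` never equals `52` or `59`, there are none.
theorem isRep_chi15_w15' : IsRep chi15 77 w15' := by
  intro U
  have h₀ := typeCount_le U 0
  have h₁ := typeCount_le U 1
  have h₂ := typeCount_le U 2
  have h₃ := typeCount_le U 3
  show 77 ≤ ∑ i ∈ U, w15 i ↔ 77 ≤ ∑ i ∈ U, w15' i
  simp only [w15_eq, w15'_eq, sum_voterType_eq, Fin.sum_univ_four] at *
  simp only [Matrix.cons_val] at *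
  omega

theorem not_isRep_of_le {q : ℕ} {w : Fin 20 → ℕ} (hw : PreservesTypes chi15 w)
    (h₀ : w 0 ≤ 24) (h₁ : w 1 ≤ 17) : ¬ IsRep chi15 q w := by
  intro hrep
  have hchi : ∀ U, chi15 U ↔ q ≤ ∑ k, typeCount U k * w (typeRep k) := fun U =>
    sum_eq_sum_typeCount_mul hw U ▸ hrep U
  have e₁ : typeCount {9, 10, 11, 12, 13, 14, 15, 16, 17, 18, 19} = ![0, 0, 0, 11] := by decide
  have e₂ : typeCount {2, 3, 4, 5, 6, 7, 8} = ![0, 0, 7, 0] := by decide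
  have e₃ : typeCount {0, 1, 9, 10, 11, 12, 13} = ![1, 1, 0, 5] := by decide
  have e₄ : typeCount {2, 3, 4, 5, 6, 9, 10, 11} = ![0, 0, 5, 3] := by decide
  have c₁ := (hchi {9, 10, 11, 12, 13, 14, 15, 16, 17, 18, 19}).1 (by decide)
  have c₂ := (hchi {2, 3, 4, 5, 6, 7, 8}).1 (by decide)
  have c₃ := (hchi {0, 1, 9, 10, 11, 12, 13}).1 (by decide)
  have c₄ := (hchi {2, 3, 4, 5, 6, 9, 10, 11}).not.1 (by decide)
  simp only [e₁, e₂, e₃, e₄, Fin.sum_univ_four, typeRep, Matrix.cons_val] at c₁ c₂ c₃ c₄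
  omega

theorem not_exists_minRepPT_chi15 : ¬ ∃ (q : ℕ) (w : Fin 20 → ℕ), MinRepPT chi15 q w := by
  rintro ⟨q, w, hrep, hw, hmin⟩
  have hle := hmin 77 w15 isRep_chi15 fun i j h => w15_eq_w15_iff.2 (vequiv_chi15_iff.1 h)
  have hle' := hmin 77 w15' isRep_chi15_w15' fun i j h => by
    rw [w15'_eq, w15'_eq, vequiv_chi15_iff.1 h]
  exact not_isRep_of_le hw (hle' 0) (hle 1) hrep

theorem stmt15 :
    NumTypes 20 chi15 = 4 ∧
    IsRep chi15 77 w15' ∧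
    (¬ ∃ (q : ℕ) (w : Fin 20 → ℕ), MinRepPT chi15 q w) ∧
    ∃ (n : ℕ) (χ : Finset (Fin n) → Prop), SimpleGame n χ ∧ IsWeighted χ ∧
      NumTypes n χ = 4 ∧ ¬ ∃ (q : ℕ) (w : Fin n → ℕ), MinRepPT χ q w :=
  ⟨numTypes_chi15, isRep_chi15_w15', not_exists_minRepPT_chi15, 20, chi15,
    isRep_chi15.simpleGame (by norm_num) (by decide), ⟨77, w15, isRep_chi15⟩, numTypes_chi15,
    not_exists_minRepPT_chi15⟩
end
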